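/- For every even integer L ≥ 2 and every real α > 0, the sum of α-th powers of the absolute values of all principal Pfaffian minors of the 2L×2L open-boundary critical XX-chain matrix equals the sum of α-th powers of the absolute values of all minors of the L×L open-boundary critical transverse-field Ising correlation matrix: Pf_α(R^OBC(2L)) = Det_α(G^OBC(L)). -/

import Mathlib

open scoped BigOperators Matrix

/-- The square submatrix of `A` with rows indexed by `I` and columns indexed by `J`
(both in increasing order), as a determinant; it is `0` if `I.card ≠ J.card`. -/
noncomputable def subdetR {N : ℕ} (A : Matrix (Fin N) (Fin N) ℝ) (I J : Finset (Fin N)) : ℝ :=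
  if h : J.card = I.card then
    Matrix.det (Matrix.of fun a b : Fin I.card =>
      A (I.orderEmbOfFin rfl a) (J.orderEmbOfFin h b))
  else 0

/-- `Det_β(A) = Σ_{k=0}^{N} Σ_{|I|=|J|=k} |det A[I,J]|^β`. -/
noncomputable def DetPowR {N : ℕ} (A : Matrix (Fin N) (Fin N) ℝ) (β : ℝ) : ℝ :=
  ∑ k ∈ Finset.range (N + 1),
    ∑ I ∈ Finset.univ.filter (fun I : Finset (Fin N) => I.card = k),
      ∑ J ∈ Finset.univ.filter (fun J : Finset (Fin N) => J.card = k),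
        |subdetR A I J| ^ β

/-- `Pf_β(R) = Σ_{S, |S| even} |det R[S,S]|^{β/2}`, the sum of β-th powers of the
absolute values of all principal Pfaffian minors of a skew-symmetric matrix. -/
noncomputable def PfPowR {N : ℕ} (R : Matrix (Fin N) (Fin N) ℝ) (β : ℝ) : ℝ :=
  ∑ S ∈ Finset.univ.filter (fun S : Finset (Fin N) => Even S.card),
    |subdetR R S S| ^ (β / 2)

/-- The open-boundary critical transverse-field Ising correlation matrix
`G^OBC_{jk} = ((-1)^{j-k}/(2L+1))[csc(π(j-k+1/2)/(2L+1)) + csc(π(j+k-1/2)/(2L+1))]`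
(`j`, `k` one-based). -/
noncomputable def Gobc (L : ℕ) : Matrix (Fin L) (Fin L) ℝ :=
  Matrix.of fun j k =>
    let J : ℝ := (j : ℕ) + 1
    let K : ℝ := (k : ℕ) + 1
    (-1 : ℝ) ^ ((j : ℤ) - (k : ℤ)) / (2 * L + 1) *
      ((Real.sin (Real.pi * (J - K + 1 / 2) / (2 * L + 1)))⁻¹ +
       (Real.sin (Real.pi * (J + K - 1 / 2) / (2 * L + 1)))⁻¹)

/-- The open-boundary critical XX-chain matrix: with `θ = π/(N+1)` and one-based
indices `j`, `k`: `R_{jk} = (1/(N+1))[csc((k-j)θ/2) + csc((k+j)θ/2)]` for `j` odd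
and `k` even, `R_{jk} = -R_{kj}` for `j` even and `k` odd, and `R_{jk} = 0` if
`j+k` is even. -/
noncomputable def Robc (N : ℕ) : Matrix (Fin N) (Fin N) ℝ :=
  Matrix.of fun j k =>
    let J : ℕ := (j : ℕ) + 1
    let K : ℕ := (k : ℕ) + 1
    let θ : ℝ := Real.pi / (N + 1)
    if J % 2 = 1 ∧ K % 2 = 0 then
      1 / (N + 1) *
        ((Real.sin (((K : ℝ) - (J : ℝ)) * θ / 2))⁻¹ +
         (Real.sin (((K : ℝ) + (J : ℝ)) * θ / 2))⁻¹)
    else if J % 2 = 0 ∧ K % 2 = 1 then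
      -(1 / (N + 1) *
        ((Real.sin (((J : ℝ) - (K : ℝ)) * θ / 2))⁻¹ +
         (Real.sin (((J : ℝ) + (K : ℝ)) * θ / 2))⁻¹))
    else 0

/-!
Label the sites of the XX chain by (odd sites, even sites). Then `R^OBC(2L)` becomes the block
matrix `[[0, P], [-Pᵀ, 0]]`, where `P` is `(G^OBC)ᵀ` with checkerboard signs. A principal minor
of such a matrix on `A ⊔ B` vanishes unless `|A| = |B|`, because the block matrix factors through
a space of dimension `2 min(|A|, |B|)`; when `|A| = |B|` it equals `± det P[A, B] ^ 2`. Hence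
`|pf R[S, S]| = |det G[B, A]|`, and `S ↦ (A, B)` matches the two sums term by term.
-/

open Matrix

theorem Function.Injective.exists_equiv_apply_eq {ι m n : Type*} {f : m → ι} {g : n → ι}
    (hf : f.Injective) (hg : g.Injective) (h : Set.range f = Set.range g) :
    ∃ e : m ≃ n, ∀ x, g (e x) = f x :=
  ⟨(Equiv.ofInjective f hf).trans ((Equiv.setCongr h).trans (Equiv.ofInjective g hg).symm),
    fun x => by simp [Equiv.apply_ofInjective_symm]⟩

theorem Matrix.abs_det_fromBlocks_zero_zero {R : Type*} [CommRing R] [LinearOrder R]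
    [IsStrictOrderedRing R] {n : Type*} [Fintype n] [DecidableEq n] (P Q : Matrix n n R) :
    |(fromBlocks 0 P Q 0).det| = |P.det| * |Q.det| := by
  have h := det_permute (Equiv.sumComm n n) (fromBlocks 0 P Q 0)
  rw [show (fromBlocks 0 P Q 0).submatrix (Equiv.sumComm n n) id = fromBlocks Q 0 0 P from
    fromBlocks_submatrix_sum_swap_left .., det_fromBlocks_zero₂₁] at h
  rw [← abs_mul, mul_comm, h, abs_mul, abs_unit_intCast, one_mul]

theorem Matrix.det_fromBlocks_zero_zero_of_card_ne {K : Type*} [Field K] {m n : Type*}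
    [Fintype m] [DecidableEq m] [Fintype n] [DecidableEq n]
    (P : Matrix m n K) (Q : Matrix n m K) (h : Fintype.card m ≠ Fintype.card n) :
    (fromBlocks 0 P Q 0).det = 0 := by
  by_contra hdet
  have hrank : (fromBlocks 0 P Q 0).rank = Fintype.card m + Fintype.card n := by
    rw [rank_of_isUnit _ ((isUnit_iff_isUnit_det _).2 (isUnit_iff_ne_zero.2 hdet)),
      Fintype.card_sum]
  -- `fromBlocks 0 P Q 0` factors through `n ⊕ n` and through `m ⊕ m`, so its rank is at most
  -- twice the smaller of the two block sizes
  have hn : fromBlocks 0 P Q 0 = (fromBlocks 0 P 1 0 : Matrix (m ⊕ n) (n ⊕ n) K) *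
      (fromBlocks Q 0 0 1 : Matrix (n ⊕ n) (m ⊕ n) K) := by
    rw [fromBlocks_multiply]; simp
  have hm : fromBlocks 0 P Q 0 = (fromBlocks 1 0 0 Q : Matrix (m ⊕ n) (m ⊕ m) K) *
      (fromBlocks 0 P 1 0 : Matrix (m ⊕ m) (m ⊕ n) K) := by
    rw [fromBlocks_multiply]; simp
  have hle_n := hrank ▸ hn ▸ (rank_mul_le_left _ _).trans (rank_le_card_width _)
  have hle_m := hrank ▸ hm ▸ (rank_mul_le_left _ _).trans (rank_le_card_width _)
  simp only [Fintype.card_sum] at hle_n hle_m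
  omega

theorem Matrix.fromBlocks_submatrix_sum_map {α l m n o l' m' n' o' : Type*}
    (A : Matrix n l α) (B : Matrix n m α) (C : Matrix o l α) (D : Matrix o m α)
    (f : n' → n) (g : o' → o) (h : l' → l) (k : m' → m) :
    (fromBlocks A B C D).submatrix (Sum.map f g) (Sum.map h k) =
      fromBlocks (A.submatrix f h) (B.submatrix f k) (C.submatrix g h) (D.submatrix g k) := by
  ext (i | i) (j | j) <;> rfl

theorem abs_subdetR_eq_abs_det_submatrix {N : ℕ} {n : Type*} [Fintype n] [DecidableEq n]
    (A : Matrix (Fin N) (Fin N) ℝ) (I J : Finset (Fin N)) {f g : n → Fin N}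
    (hf : f.Injective) (hg : g.Injective) (hfI : Set.range f = I) (hgJ : Set.range g = J) :
    |subdetR A I J| = |(A.submatrix f g).det| := by
  obtain ⟨eI, heI⟩ := hf.exists_equiv_apply_eq (I.orderEmbOfFin rfl).injective
    (by rw [hfI, Finset.range_orderEmbOfFin])
  obtain ⟨eJ, -⟩ := hg.exists_equiv_apply_eq (J.orderEmbOfFin rfl).injective
    (by rw [hgJ, Finset.range_orderEmbOfFin])
  have hcard : J.card = I.card := by
    simpa using (Fintype.card_congr eJ).symm.trans (Fintype.card_congr eI)
  obtain ⟨eJ', heJ'⟩ := hg.exists_equiv_apply_eq (J.orderEmbOfFin hcard).injective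
    (by rw [hgJ, Finset.range_orderEmbOfFin])
  rw [subdetR, dif_pos hcard, ← abs_det_submatrix_equiv_equiv eI eJ']
  congr 2
  ext i j
  simp [heI, heJ']

def Matrix.checkerboard {R : Type*} [Ring R] {n : ℕ} (A : Matrix (Fin n) (Fin n) R) :
    Matrix (Fin n) (Fin n) R :=
  of fun i j => (-1) ^ ((i : ℕ) + j) * A i j

theorem Matrix.abs_det_submatrix_checkerboard {R : Type*} [CommRing R] [LinearOrder R]
    [IsStrictOrderedRing R] {N : ℕ} {n : Type*} [Fintype n] [DecidableEq n]
    (A : Matrix (Fin N) (Fin N) R) (f g : n → Fin N) :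
    |(A.checkerboard.submatrix f g).det| = |(A.submatrix f g).det| := by
  have h : A.checkerboard.submatrix f g =
      of fun i j => (-1) ^ (f i : ℕ) *
        of (fun i j => (-1) ^ (g j : ℕ) * A.submatrix f g i j) i j := by
    ext i j; simp [checkerboard, pow_add, mul_assoc]
  rw [h, det_mul_column, det_mul_row, abs_mul, abs_mul, Finset.abs_prod, Finset.abs_prod]
  simp

/-- In the one-based labels of `Robc`, `inl` enumerates the odd sites and `inr` the even ones. -/
def evenOddEquiv (L : ℕ) : Fin L ⊕ Fin L ≃ Fin (2 * L) where
  toFun := Sum.elim (fun a => ⟨2 * a, by omega⟩) (fun b => ⟨2 * b + 1, by omega⟩)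
  invFun x := if (x : ℕ) % 2 = 0 then .inl ⟨x / 2, by omega⟩ else .inr ⟨x / 2, by omega⟩
  left_inv := by
    rintro (a | b) <;> simp [Fin.ext_iff]
    omega
  right_inv x := by
    by_cases hx : (x : ℕ) % 2 = 0 <;> simp [hx, Fin.ext_iff] <;> omega

theorem Robc_evenOddEquiv_inl_inr {L : ℕ} (a b : Fin L) :
    Robc (2 * L) (evenOddEquiv L (.inl a)) (evenOddEquiv L (.inr b)) =
      (Gobc L)ᵀ.checkerboard a b := by
  have hodd : (2 * (a : ℕ) + 1) % 2 = 1 ∧ (2 * (b : ℕ) + 1 + 1) % 2 = 0 := by omega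
  have hsign : (-1 : ℝ) ^ ((a : ℕ) + b) * ((-1) ^ ((b : ℤ) - a) / (2 * L + 1)) =
      1 / (2 * L + 1) := by
    rw [mul_div_assoc', ← zpow_natCast, ← zpow_add₀ (by norm_num),
      show (((a : ℕ) + b : ℕ) : ℤ) + (b - a) = 2 * b by push_cast; ring, _root_.zpow_mul]
    norm_num
  simp only [Robc, Gobc, checkerboard, evenOddEquiv, Equiv.coe_fn_mk, Sum.elim_inl, Sum.elim_inr,
    of_apply, transpose_apply, if_pos hodd]
  rw [← mul_assoc, hsign]
  push_cast
  ring_nf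

theorem Robc_evenOddEquiv_inr_inl {L : ℕ} (a b : Fin L) :
    Robc (2 * L) (evenOddEquiv L (.inr b)) (evenOddEquiv L (.inl a)) =
      -Robc (2 * L) (evenOddEquiv L (.inl a)) (evenOddEquiv L (.inr b)) := by
  have hodd : (2 * (a : ℕ) + 1) % 2 = 1 ∧ (2 * (b : ℕ) + 1 + 1) % 2 = 0 := by omega
  have heven : ¬ ((2 * (b : ℕ) + 1 + 1) % 2 = 1 ∧ (2 * (a : ℕ) + 1) % 2 = 0) := by omega
  have heven' : (2 * (b : ℕ) + 1 + 1) % 2 = 0 ∧ (2 * (a : ℕ) + 1) % 2 = 1 := by omega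
  simp only [Robc, evenOddEquiv, Equiv.coe_fn_mk, Sum.elim_inl, Sum.elim_inr, of_apply,
    if_pos hodd, if_neg heven, if_pos heven']

theorem Robc_of_mod_two_eq {N : ℕ} {j k : Fin N} (h : (j : ℕ) % 2 = k % 2) :
    Robc N j k = 0 := by
  simp only [Robc, of_apply]
  rw [if_neg (by omega), if_neg (by omega)]

theorem Robc_submatrix_evenOddEquiv (L : ℕ) :
    (Robc (2 * L)).submatrix (evenOddEquiv L) (evenOddEquiv L) =
      fromBlocks 0 (Gobc L)ᵀ.checkerboard (-(Gobc L)ᵀ.checkerboardᵀ) 0 := by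
  ext (a | b) (a' | b')
  · exact Robc_of_mod_two_eq (by simp [evenOddEquiv])
  · exact Robc_evenOddEquiv_inl_inr a b'
  · simp [Robc_evenOddEquiv_inr_inl, Robc_evenOddEquiv_inl_inr]
  · exact Robc_of_mod_two_eq (by simp [evenOddEquiv])

theorem abs_subdetR_Robc_eq_abs_det_fromBlocks {L : ℕ} (s t : Finset (Fin L))
    {m n : Type*} [Fintype m] [DecidableEq m] [Fintype n] [DecidableEq n]
    {f : m → Fin L} {g : n → Fin L} (hf : f.Injective) (hg : g.Injective)
    (hfs : Set.range f = s) (hgt : Set.range g = t) :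
    |subdetR (Robc (2 * L)) ((s.disjSum t).map (evenOddEquiv L).toEmbedding)
        ((s.disjSum t).map (evenOddEquiv L).toEmbedding)| =
      |(fromBlocks 0 ((Gobc L)ᵀ.checkerboard.submatrix f g)
        (-((Gobc L)ᵀ.checkerboard.submatrix f g)ᵀ) 0).det| := by
  have hinj : (evenOddEquiv L ∘ Sum.map f g).Injective :=
    (evenOddEquiv L).injective.comp (hf.sumMap hg)
  have hrange : Set.range (evenOddEquiv L ∘ Sum.map f g) =
      ((s.disjSum t).map (evenOddEquiv L).toEmbedding : Finset (Fin (2 * L))) := by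
    rw [Finset.coe_map, Set.range_comp]
    congr 1
    ext (y | y)
    · rw [Finset.mem_coe, Finset.inl_mem_disjSum, ← Finset.mem_coe, ← hfs]
      simp
    · rw [Finset.mem_coe, Finset.inr_mem_disjSum, ← Finset.mem_coe, ← hgt]
      simp
  rw [abs_subdetR_eq_abs_det_submatrix _ _ _ hinj hinj hrange hrange, ← submatrix_submatrix,
    Robc_submatrix_evenOddEquiv, fromBlocks_submatrix_sum_map]
  rfl

theorem abs_subdetR_Robc_map_disjSum {L : ℕ} (s t : Finset (Fin L)) :
    |subdetR (Robc (2 * L)) ((s.disjSum t).map (evenOddEquiv L).toEmbedding)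
        ((s.disjSum t).map (evenOddEquiv L).toEmbedding)| =
      if s.card = t.card then |subdetR (Gobc L) t s| ^ 2 else 0 := by
  split_ifs with h
  · set f := s.orderEmbOfFin h
    set g := t.orderEmbOfFin rfl
    have hP : |((Gobc L)ᵀ.checkerboard.submatrix f g).det| = |subdetR (Gobc L) t s| := by
      rw [abs_det_submatrix_checkerboard, ← transpose_submatrix, det_transpose,
        abs_subdetR_eq_abs_det_submatrix _ _ _ g.injective f.injective
          (t.range_orderEmbOfFin rfl) (s.range_orderEmbOfFin h)]
    rw [abs_subdetR_Robc_eq_abs_det_fromBlocks s t f.injective g.injective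
      (s.range_orderEmbOfFin h) (t.range_orderEmbOfFin rfl), abs_det_fromBlocks_zero_zero,
      det_neg, det_transpose, abs_mul, abs_pow, abs_neg, abs_one, one_pow, one_mul, hP, sq]
  · rw [abs_subdetR_Robc_eq_abs_det_fromBlocks (f := ((↑) : s → Fin L))
      (g := ((↑) : t → Fin L)) s t Subtype.val_injective Subtype.val_injective (by simp)
      (by simp), det_fromBlocks_zero_zero_of_card_ne _ _ (by simpa using h), abs_zero]

theorem DetPowR_eq_sum_prod {N : ℕ} (A : Matrix (Fin N) (Fin N) ℝ) (β : ℝ) :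
    DetPowR A β = ∑ p : Finset (Fin N) × Finset (Fin N),
      if p.1.card = p.2.card then |subdetR A p.1 p.2| ^ β else 0 := by
  calc DetPowR A β
      = ∑ k ∈ Finset.range (N + 1), ∑ I ∈ Finset.univ.filter (fun I => I.card = k),
          ∑ J, if I.card = J.card then |subdetR A I J| ^ β else 0 := by
        refine Finset.sum_congr rfl fun k _ => Finset.sum_congr rfl fun I hI => ?_
        rw [(Finset.mem_filter.1 hI).2, Finset.sum_filter]
        simp_rw [eq_comm]
    _ = ∑ I, ∑ J, if I.card = J.card then |subdetR A I J| ^ β else 0 :=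
        Finset.sum_fiberwise_of_maps_to (fun I _ =>
          Finset.mem_range.2 (Nat.lt_succ_of_le (by simpa using Finset.card_le_univ I))) _
    _ = _ := (Fintype.sum_prod_type' _).symm

theorem pf_det_correspondence_obc_general (L : ℕ) :
    ∀ α : ℝ, 0 < α → PfPowR (Robc (2 * L)) α = DetPowR (Gobc L) α := by
  intro α hα
  have hterm (s t : Finset (Fin L)) :
      |subdetR (Robc (2 * L)) ((s.disjSum t).map (evenOddEquiv L).toEmbedding)
        ((s.disjSum t).map (evenOddEquiv L).toEmbedding)| ^ (α / 2) =
      if s.card = t.card then |subdetR (Gobc L) t s| ^ α else 0 := by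
    rw [abs_subdetR_Robc_map_disjSum]
    split_ifs
    · rw [← Real.rpow_natCast, ← Real.rpow_mul (abs_nonneg _), Nat.cast_ofNat,
        mul_div_cancel₀ _ two_ne_zero]
    · exact Real.zero_rpow (by positivity)
  rw [PfPowR, Finset.sum_filter, DetPowR_eq_sum_prod]
  refine (Fintype.sum_equiv ((Equiv.prodComm _ _).trans
    (Finset.sumEquiv.symm.toEquiv.trans (evenOddEquiv L).finsetCongr)) _ _
    fun ⟨I, J⟩ => ?_).symm
  simp only [Equiv.trans_apply, Equiv.prodComm_apply, Prod.swap_prod_mk, OrderIso.coe_toEquiv,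
    Finset.sumEquiv_symm_apply, Equiv.finsetCongr_apply, Finset.card_map, Finset.card_disjSum,
    hterm]
  by_cases h : I.card = J.card
  · simp [h]
  · simp [h, Ne.symm h]

/-- **Stabilizer–Shannon correspondence, open-boundary case.**  For every even
`L ≥ 2` and every real `α > 0`,
`Pf_α(R^OBC(2L)) = Det_α(G^OBC(L))`. -/
theorem pf_det_correspondence_obc (L : ℕ) (hL : Even L) (hL2 : 2 ≤ L) :
    ∀ α : ℝ, 0 < α → PfPowR (Robc (2 * L)) α = DetPowR (Gobc L) α :=
  pf_det_correspondence_obc_general L
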